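/- For every natural number a and every real number θ, the accuracy function of the frequent outcome approach has the condensed polynomial form π_{2a+1}(θ) = 1 − Σ_{i=1}^{a} θ^i·(1−θ)^i·C_{i−1} − 2·(a+1)·C_a·θ^{a+1}·(1−θ)^{a+1}, where C_n denotes the n-th Catalan number. -/

import Mathlib

open Finset

/-- Prediction weight of the frequent outcome approach. -/
noncomputable def w (k n : ℕ) (θ : ℝ) : ℝ :=
  if 2 * n < k then 1 - θ else if 2 * n = k then 1 / 2 else θ

/-- Accuracy function of the frequent outcome approach. -/
noncomputable def acc (k : ℕ) (θ : ℝ) : ℝ :=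
  ∑ n ∈ Finset.range (k + 1), w k n θ * (k.choose n) * θ ^ n * (1 - θ) ^ (k - n)

/-!
For odd `k = 2a + 1` there are no ties, so the weight is `1 - θ` up to the median and `θ`
beyond it; hence `π_{2a+1} = θ + (1 - 2θ) F_a`, where `F_a` is the probability of at most `a`
successes in `2a + 1` trials. Two further trials change that probability only through the
outcomes at the median, which by Pascal's rule gives
`F_{a+1} - F_a = C(2a+1, a) (θ(1-θ))^(a+1) (1 - 2θ)`. With `C(2a+1, a) = (2a+1) C_a` and
`(a+2) C_{a+1} = 2 (2a+1) C_a`, the claimed polynomial has the same increments, so induction on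
`a` finishes the proof.
-/

namespace Nat

theorem choose_two_mul_add_one_self_eq (a : ℕ) :
    (2 * a + 1).choose a = (2 * a + 1) * catalan a := by
  refine Nat.eq_of_mul_eq_mul_left a.succ_pos ?_
  have h := choose_mul_succ_eq (2 * a) a
  rw [show 2 * a + 1 - a = a + 1 by omega, ← centralBinom_eq_two_mul_choose,
    ← succ_mul_catalan_eq_centralBinom] at h
  linarith

theorem add_two_mul_catalan_succ (a : ℕ) :
    (a + 2) * catalan (a + 1) = 2 * (2 * a + 1) * catalan a := by
  refine Nat.eq_of_mul_eq_mul_left a.succ_pos ?_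
  have h := succ_mul_centralBinom_succ a
  rw [← succ_mul_catalan_eq_centralBinom, ← succ_mul_catalan_eq_centralBinom] at h
  linarith

end Nat

section BinomLowerTail

variable {R : Type*}

/-- For `x + y = 1` this is the probability of at most `m` successes in `n` Bernoulli trials
with success probability `x`. -/
def binomLowerTail [CommSemiring R] (n m : ℕ) (x y : R) : R :=
  ∑ k ∈ range (m + 1), (n.choose k : R) * x ^ k * y ^ (n - k)

theorem binomLowerTail_self [CommSemiring R] (n : ℕ) (x y : R) :
    binomLowerTail n n x y = (x + y) ^ n := by
  rw [add_pow, binomLowerTail]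
  exact sum_congr rfl fun k _ ↦ by ring

theorem binomLowerTail_succ_right [CommSemiring R] (n m : ℕ) (x y : R) :
    binomLowerTail n (m + 1) x y
      = binomLowerTail n m x y + (n.choose (m + 1) : R) * x ^ (m + 1) * y ^ (n - (m + 1)) :=
  sum_range_succ _ _

theorem binomLowerTail_succ_succ [CommSemiring R] (n m : ℕ) (x y : R) :
    binomLowerTail (n + 1) (m + 1) x y
      = y * binomLowerTail n (m + 1) x y + x * binomLowerTail n m x y := by
  have hshift : ∀ k, (n.choose (k + 1) : R) * x ^ (k + 1) * y ^ (n + 1 - (k + 1))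
      = y * ((n.choose (k + 1) : R) * x ^ (k + 1) * y ^ (n - (k + 1))) := by
    intro k
    rcases le_or_gt (k + 1) n with hk | hk
    · rw [show n + 1 - (k + 1) = n - (k + 1) + 1 by omega, pow_succ]
      ring
    · simp [Nat.choose_eq_zero_of_lt hk]
  have hx : ∑ k ∈ range (m + 1), (n.choose k : R) * x ^ (k + 1) * y ^ (n + 1 - (k + 1))
      = x * binomLowerTail n m x y := by
    rw [binomLowerTail, mul_sum]
    exact sum_congr rfl fun k _ ↦ by rw [Nat.add_sub_add_right]; ring
  rw [binomLowerTail, sum_range_succ']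
  simp only [Nat.choose_succ_succ, Nat.cast_add, add_mul, sum_add_distrib, hshift, hx, ← mul_sum]
  rw [binomLowerTail.eq_1 n (m + 1),
    sum_range_succ' (fun k ↦ (n.choose k : R) * x ^ k * y ^ (n - k)) (m + 1)]
  simp only [Nat.choose_zero_right, Nat.cast_one, pow_zero, Nat.sub_zero, pow_succ]
  ring

theorem binomLowerTail_two_mul_add_three [CommRing R] (a : ℕ) (x : R) :
    binomLowerTail (2 * (a + 1) + 1) (a + 1) x (1 - x)
      = binomLowerTail (2 * a + 1) a x (1 - x)
        + ((2 * a + 1).choose a : R) * x ^ (a + 1) * (1 - x) ^ (a + 1) * (1 - 2 * x) := by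
  have h₁ := binomLowerTail_succ_succ (2 * a + 2) a x (1 - x)
  have h₂ := binomLowerTail_succ_right (2 * a + 2) a x (1 - x)
  have h₃ := binomLowerTail_succ_succ (2 * a + 1) a x (1 - x)
  have h₄ := binomLowerTail_succ_right (2 * a + 1) a x (1 - x)
  have hpascal : ((2 * a + 2).choose (a + 1) : R) = 2 * (2 * a + 1).choose a := by
    rw [Nat.choose_succ_succ, Nat.choose_symm_half]
    push_cast; ring
  rw [Nat.choose_symm_half, show 2 * a + 1 - (a + 1) = a by omega] at h₄
  rw [hpascal, show 2 * a + 2 - (a + 1) = a + 1 by omega] at h₂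
  rw [show 2 * a + 1 + 1 = 2 * a + 2 by ring] at h₃
  rw [show 2 * (a + 1) + 1 = 2 * a + 2 + 1 by ring, h₁]
  linear_combination (-x) * h₂ + h₃ + (1 - x) * h₄

end BinomLowerTail

theorem w_two_mul_add_one_of_le {a n : ℕ} (θ : ℝ) (h : n ≤ a) : w (2 * a + 1) n θ = 1 - θ := by
  rw [w, if_pos (by omega)]

theorem w_two_mul_add_one_of_lt {a n : ℕ} (θ : ℝ) (h : a < n) : w (2 * a + 1) n θ = θ := by
  rw [w, if_neg (by omega), if_neg (by omega)]

theorem acc_two_mul_add_one (a : ℕ) (θ : ℝ) :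
    acc (2 * a + 1) θ = θ + (1 - 2 * θ) * binomLowerTail (2 * a + 1) a θ (1 - θ) := by
  set b : ℕ → ℝ := fun n ↦ ((2 * a + 1).choose n : ℝ) * θ ^ n * (1 - θ) ^ (2 * a + 1 - n)
  have hsplit (f : ℕ → ℝ) : ∑ n ∈ range (2 * a + 1 + 1), f n
      = ∑ n ∈ range (a + 1), f n + ∑ n ∈ Ico (a + 1) (2 * a + 1 + 1), f n :=
    (sum_range_add_sum_Ico f (by omega)).symm
  have htotal : ∑ n ∈ range (2 * a + 1 + 1), b n = 1 := by
    rw [← binomLowerTail, binomLowerTail_self, add_sub_cancel, one_pow]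
  have hlow : ∑ n ∈ range (a + 1), w (2 * a + 1) n θ * b n
      = (1 - θ) * ∑ n ∈ range (a + 1), b n := by
    rw [mul_sum]
    refine sum_congr rfl fun n hn ↦ ?_
    rw [w_two_mul_add_one_of_le θ (Nat.lt_succ_iff.mp (mem_range.mp hn))]
  have hhigh : ∑ n ∈ Ico (a + 1) (2 * a + 1 + 1), w (2 * a + 1) n θ * b n
      = θ * ∑ n ∈ Ico (a + 1) (2 * a + 1 + 1), b n := by
    rw [mul_sum]
    refine sum_congr rfl fun n hn ↦ ?_
    rw [w_two_mul_add_one_of_lt θ (mem_Ico.mp hn).1]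
  have hacc : acc (2 * a + 1) θ = ∑ n ∈ range (2 * a + 1 + 1), w (2 * a + 1) n θ * b n :=
    sum_congr rfl fun n _ ↦ by ring
  rw [hsplit] at htotal
  rw [hacc, hsplit, hlow, hhigh, binomLowerTail]
  linear_combination θ * htotal

theorem acc_two_mul_add_three (a : ℕ) (θ : ℝ) :
    acc (2 * (a + 1) + 1) θ = acc (2 * a + 1) θ
      + (2 * a + 1) * catalan a * θ ^ (a + 1) * (1 - θ) ^ (a + 1) * (1 - 2 * θ) ^ 2 := by
  rw [acc_two_mul_add_one, acc_two_mul_add_one, binomLowerTail_two_mul_add_three,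
    Nat.choose_two_mul_add_one_self_eq]
  push_cast
  ring

theorem accuracy_condensed_polynomial_form (a : ℕ) (θ : ℝ) :
    acc (2 * a + 1) θ =
      1 - ∑ i ∈ Finset.Icc 1 a, θ ^ i * (1 - θ) ^ i * (catalan (i - 1) : ℝ)
        - 2 * (a + 1) * (catalan a : ℝ) * θ ^ (a + 1) * (1 - θ) ^ (a + 1) := by
  induction a with
  | zero =>
    rw [acc_two_mul_add_one, binomLowerTail, sum_range_one, Icc_eq_empty (by omega), sum_empty,
      catalan_zero]
    simp only [Nat.choose_zero_right, Nat.cast_one, Nat.cast_zero]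
    ring
  | succ a ih =>
    have hcatalan : ((a : ℝ) + 2) * catalan (a + 1) = 2 * (2 * a + 1) * catalan a := by
      exact_mod_cast Nat.add_two_mul_catalan_succ a
    rw [acc_two_mul_add_three, ih, sum_Icc_succ_top (by omega), Nat.add_sub_cancel]
    push_cast
    linear_combination (2 * θ ^ (a + 2) * (1 - θ) ^ (a + 2)) * hcatalan
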